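/- For every Boolean function f: {0,1}^n → {0,1}, there exists a restriction ρ with |ρ^{-1}(*)| = O(D(f)) such that D(f|_ρ) = Ω(√(D(f))), where D denotes deterministic decision tree (query) complexity. -/

import Mathlib

/-!
Write `D = D(f)`. By Midrijanis, `D ≤ bs(f) · deg(f)`, so either `deg(f) ≥ √D`, or `s(f) ≥ √D`, or
`bs(f) ≥ √D > s(f)`. Degree and sensitivity condense losslessly: leaving free only a maximal
monomial of the multilinear representation (resp. the sensitive variables at a most sensitive
input) keeps the measure, hence `D ≥` it, with at most `D` free variables. In the last case take
`⌈√D⌉` disjoint sensitive blocks at one input, shrink them to minimal ones, of size `≤ s(f) < √D`,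
and leave their union free: at most `(√D + 1)√D ≤ 2D` variables, while block sensitivity, hence
`D`, stays `≥ √D`.
-/

open Finset

section Core
variable {ι : Type} [Fintype ι] [DecidableEq ι]

/-- Flip the bits of `x` indexed by the block `B`. -/
def flipSet (x : ι → Bool) (B : Finset ι) : ι → Bool :=
  fun i => if i ∈ B then !(x i) else x i

/-- Sensitivity of `f` at input `x`. -/
def sensAt (f : (ι → Bool) → Bool) (x : ι → Bool) : ℕ :=
  (univ.filter fun i => f (flipSet x {i}) ≠ f x).card

/-- Sensitivity of `f`. -/
def sens (f : (ι → Bool) → Bool) : ℕ :=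
  univ.sup fun x => sensAt f x

/-- Block sensitivity of `f` at `x`: the maximal number of pairwise disjoint
sensitive blocks at `x`. -/
noncomputable def bsAt (f : (ι → Bool) → Bool) (x : ι → Bool) : ℕ :=
  sSup {r | ∃ B : Fin r → Finset ι,
    (∀ j, f (flipSet x (B j)) ≠ f x) ∧
    ∀ j₁ j₂, j₁ ≠ j₂ → Disjoint (B j₁) (B j₂)}

/-- Block sensitivity of `f`. -/
noncomputable def blockSens (f : (ι → Bool) → Bool) : ℕ :=
  univ.sup fun x => bsAt f x

/-- `S` is a certificate for `f` at `x`: every input agreeing with `x` on `S`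
 has the same `f`-value as `x`. -/
def IsCert (f : (ι → Bool) → Bool) (x : ι → Bool) (S : Finset ι) : Prop :=
  ∀ y : ι → Bool, (∀ i ∈ S, y i = x i) → f y = f x

/-- Certificate complexity of `f` at `x`. -/
noncomputable def certAt (f : (ι → Bool) → Bool) (x : ι → Bool) : ℕ :=
  sInf {c | ∃ S : Finset ι, S.card = c ∧ IsCert f x S}

/-- Certificate complexity of `f`. -/
noncomputable def certC (f : (ι → Bool) → Bool) : ℕ :=
  univ.sup fun x => certAt f x

/-- 0-certificate complexity of `f`. -/
noncomputable def cert0 (f : (ι → Bool) → Bool) : ℕ :=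
  (univ.filter fun x => f x = false).sup fun x => certAt f x

/-- 1-certificate complexity of `f`. -/
noncomputable def cert1 (f : (ι → Bool) → Bool) : ℕ :=
  (univ.filter fun x => f x = true).sup fun x => certAt f x

/-- The restriction of `f` by the partial assignment `ρ` (a variable `i` with
`ρ i = none` is left unset; otherwise it is fixed to the given value). The
restricted function depends only on the unset variables. -/
def restrictBF (f : (ι → Bool) → Bool) (ρ : ι → Option Bool) : (ι → Bool) → Bool :=
  fun x => f fun i => (ρ i).getD (x i)

/-- Number of unset variables of a partial assignment. -/
def unsetCard (ρ : ι → Option Bool) : ℕ :=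
  (univ.filter fun i => ρ i = none).card

end Core

/-- Deterministic decision trees over variables indexed by `ι`. -/
inductive DTree (ι : Type) where
  | leaf : Bool → DTree ι
  | node : ι → DTree ι → DTree ι → DTree ι

/-- Evaluation of a decision tree on an input. -/
def DTree.eval {ι : Type} : DTree ι → (ι → Bool) → Bool
  | .leaf b, _ => b
  | .node i t0 t1, x => if x i then t1.eval x else t0.eval x

/-- Depth (worst-case number of queries) of a decision tree. -/
def DTree.depth {ι : Type} : DTree ι → ℕ
  | .leaf _ => 0
  | .node _ t0 t1 => max t0.depth t1.depth + 1

/-- Deterministic query (decision tree) complexity. -/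
noncomputable def Dquery {ι : Type} (f : (ι → Bool) → Bool) : ℕ :=
  sInf {d | ∃ T : DTree ι, T.depth ≤ d ∧ ∀ x, T.eval x = f x}

open Function

section Flip

variable {ι : Type} [DecidableEq ι]

@[simp]
lemma flipSet_empty (x : ι → Bool) : flipSet x ∅ = x := by
  funext i; simp [flipSet]

lemma flipSet_apply_of_notMem {x : ι → Bool} {B : Finset ι} {i : ι} (h : i ∉ B) :
    flipSet x B i = x i := if_neg h

lemma flipSet_flipSet (x : ι → Bool) (A B : Finset ι) :
    flipSet (flipSet x A) B = flipSet x (symmDiff A B) := by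
  funext i
  by_cases hA : i ∈ A <;> by_cases hB : i ∈ B <;> simp [flipSet, mem_symmDiff, hA, hB]

lemma flipSet_flipSet_self (x : ι → Bool) (B : Finset ι) : flipSet (flipSet x B) B = x := by
  rw [flipSet_flipSet, symmDiff_self, Finset.bot_eq_empty, flipSet_empty]

lemma flipSet_comm (x : ι → Bool) (A B : Finset ι) :
    flipSet (flipSet x A) B = flipSet (flipSet x B) A := by
  rw [flipSet_flipSet, flipSet_flipSet, symmDiff_comm]

lemma flipSet_insert {i : ι} {T : Finset ι} (h : i ∉ T) (x : ι → Bool) :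
    flipSet x (insert i T) = flipSet (flipSet x {i}) T := by
  rw [flipSet_flipSet]
  congr 1
  ext j
  by_cases j = i <;> simp_all [mem_symmDiff]

lemma flipSet_erase {i : ι} {C : Finset ι} (h : i ∈ C) (x : ι → Bool) :
    flipSet (flipSet x C) {i} = flipSet x (C.erase i) := by
  rw [flipSet_flipSet]
  congr 1
  ext j
  by_cases j = i <;> simp_all [mem_symmDiff]

end Flip

section Restrict

variable {ι : Type}

def fill (ρ : ι → Option Bool) (x : ι → Bool) : ι → Bool :=
  fun i => (ρ i).getD (x i)

lemma restrictBF_apply (f : (ι → Bool) → Bool) (ρ : ι → Option Bool) (x : ι → Bool) :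
    restrictBF f ρ x = f (fill ρ x) := rfl

variable [DecidableEq ι]

lemma fill_flipSet (ρ : ι → Option Bool) (x : ι → Bool) (B : Finset ι) :
    fill ρ (flipSet x B) = flipSet (fill ρ x) {i ∈ B | ρ i = none} := by
  funext i
  cases h : ρ i <;> by_cases hB : i ∈ B <;> simp [fill, flipSet, h, hB]

def fixOutside (U : Finset ι) (w : ι → Bool) : ι → Option Bool :=
  fun i => if i ∈ U then none else some (w i)

def fixOn (U : Finset ι) (w : ι → Bool) : ι → Option Bool :=
  fun i => if i ∈ U then some (w i) else none

lemma unsetCard_fixOutside [Fintype ι] (U : Finset ι) (w : ι → Bool) :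
    unsetCard (fixOutside U w) = U.card := by
  simp [unsetCard, fixOutside]

lemma fill_fixOutside_self (U : Finset ι) (w : ι → Bool) : fill (fixOutside U w) w = w := by
  funext i
  by_cases hU : i ∈ U <;> simp [fill, fixOutside, hU]

lemma restrictBF_fixOutside_flipSet (f : (ι → Bool) → Bool) {U B : Finset ι} (hB : B ⊆ U)
    (w : ι → Bool) : restrictBF f (fixOutside U w) (flipSet w B) = f (flipSet w B) := by
  rw [restrictBF_apply]
  congr 1
  funext i
  by_cases hU : i ∈ U
  · simp [fill, fixOutside, hU]
  · simp [fill, fixOutside, flipSet, hU, show i ∉ B from fun h => hU (hB h)]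

lemma fill_fixOn (U : Finset ι) (w x : ι → Bool) : fill (fixOn U w) x = U.piecewise w x := by
  funext i
  by_cases hU : i ∈ U <;> simp [fill, fixOn, hU]

lemma restrictBF_fixOn_fixOn (f : (ι → Bool) → Bool) (A B : Finset ι) (u w : ι → Bool) :
    restrictBF (restrictBF f (fixOn A u)) (fixOn B w) =
      restrictBF f (fixOn (A ∪ B) (A.piecewise u w)) := by
  funext x
  simp only [restrictBF_apply, fill_fixOn]
  congr 1
  funext i
  by_cases hA : i ∈ A <;> by_cases hB : i ∈ B <;> simp [hA, hB]

end Restrict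

namespace DTree

variable {ι : Type}

lemma eval_node (i : ι) (t₀ t₁ : DTree ι) (x : ι → Bool) :
    (node i t₀ t₁).eval x = if x i then t₁.eval x else t₀.eval x := rfl

def queries [DecidableEq ι] : DTree ι → (ι → Bool) → Finset ι
  | .leaf _, _ => ∅
  | .node i t₀ t₁, x => insert i (if x i then t₁.queries x else t₀.queries x)

variable [DecidableEq ι]

lemma card_queries_le (T : DTree ι) (x : ι → Bool) : (T.queries x).card ≤ T.depth := by
  induction T with
  | leaf => simp [queries]
  | node i t₀ t₁ ih₀ ih₁ =>
    refine (card_insert_le _ _).trans ?_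
    simp only [depth]
    split <;> omega

lemma isCert_queries (T : DTree ι) (x : ι → Bool) : IsCert T.eval x (T.queries x) := by
  intro y hy
  induction T with
  | leaf => rfl
  | node i t₀ t₁ ih₀ ih₁ =>
    simp only [queries] at hy
    have hi : y i = x i := hy i (mem_insert_self _ _)
    simp only [eval_node, hi]
    split
    · exact ih₁ fun j hj => hy j (mem_insert_of_mem (by simp [*]))
    · exact ih₀ fun j hj => hy j (mem_insert_of_mem (by simp [*]))

lemma exists_of_restrictBF_fixOn {f : (ι → Bool) → Bool} {m : ℕ} (M : Finset ι)
    (h : ∀ w, ∃ T : DTree ι, T.depth ≤ m ∧ ∀ x, T.eval x = restrictBF f (fixOn M w) x) :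
    ∃ T : DTree ι, T.depth ≤ m + M.card ∧ ∀ x, T.eval x = f x := by
  induction M using Finset.induction_on generalizing f with
  | empty =>
    obtain ⟨T, hT, hTf⟩ := h fun _ => false
    exact ⟨T, hT, fun x => by simp [hTf, restrictBF_apply, fill_fixOn]⟩
  | insert i M hi ih =>
    have hb : ∀ b : Bool, ∃ T : DTree ι, T.depth ≤ m + M.card ∧
        ∀ x, T.eval x = restrictBF f (fixOn {i} fun _ => b) x := fun b =>
      ih fun w => by
        simpa only [restrictBF_fixOn_fixOn, ← insert_eq] using h _
    obtain ⟨T₀, hT₀, hT₀f⟩ := hb false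
    obtain ⟨T₁, hT₁, hT₁f⟩ := hb true
    refine ⟨node i T₀ T₁, by simp only [depth, card_insert_of_notMem hi]; omega, fun x => ?_⟩
    have hx : ∀ b, x i = b → restrictBF f (fixOn {i} fun _ => b) x = f x := by
      rintro b rfl
      simp [restrictBF_apply, fill_fixOn, piecewise_singleton]
    cases h : x i
    · simp [eval_node, h, hT₀f, hx false h]
    · simp [eval_node, h, hT₁f, hx true h]

end DTree

section Query

variable {ι : Type}

lemma Dquery_le_depth {f : (ι → Bool) → Bool} (T : DTree ι) (h : ∀ x, T.eval x = f x) :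
    Dquery f ≤ T.depth :=
  Nat.sInf_le ⟨T, le_rfl, h⟩

variable [Fintype ι] [DecidableEq ι]

lemma exists_depth_le_Dquery (f : (ι → Bool) → Bool) :
    ∃ T : DTree ι, T.depth ≤ Dquery f ∧ ∀ x, T.eval x = f x := by
  obtain ⟨T, -, hTf⟩ := DTree.exists_of_restrictBF_fixOn (m := 0) (f := f) univ fun w =>
    ⟨.leaf (f w), le_rfl, fun x => by simp [DTree.eval, restrictBF_apply, fill_fixOn]⟩
  exact Nat.sInf_mem (s := {d | ∃ T : DTree ι, T.depth ≤ d ∧ ∀ x, T.eval x = f x})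
    ⟨_, T, le_rfl, hTf⟩

lemma Dquery_le_add_card {f : (ι → Bool) → Bool} {m : ℕ} (M : Finset ι)
    (h : ∀ w, Dquery (restrictBF f (fixOn M w)) ≤ m) : Dquery f ≤ m + M.card := by
  obtain ⟨T, hT, hTf⟩ := DTree.exists_of_restrictBF_fixOn M fun w =>
    (exists_depth_le_Dquery _).imp fun _ hT => ⟨hT.1.trans (h w), hT.2⟩
  exact (Dquery_le_depth T hTf).trans hT

end Query

lemma isCert_univ {ι : Type} [Fintype ι] (f : (ι → Bool) → Bool) (x : ι → Bool) :
    IsCert f x univ :=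
  fun _ hy => congrArg f (funext fun i => hy i (mem_univ i))

lemma pairwise_disjoint_singleton {ι : Type} (s : Finset ι) :
    Pairwise (Disjoint on fun i : s => ({i.1} : Finset ι)) :=
  fun _ _ h => disjoint_singleton.2 (Subtype.coe_injective.ne h)

section BlockSensitivity

variable {ι κ : Type} [DecidableEq ι] {f : (ι → Bool) → Bool} {x : ι → Bool}

lemma card_le_card_of_isCert [Fintype κ] {B : κ → Finset ι} {S : Finset ι}
    (hsens : ∀ j, f (flipSet x (B j)) ≠ f x) (hdisj : Pairwise (Disjoint on B))
    (hS : IsCert f x S) : Fintype.card κ ≤ S.card := by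
  have hmeet : ∀ j, ∃ i ∈ B j, i ∈ S := fun j => by
    by_contra! h
    exact hsens j (hS _ fun i hi => flipSet_apply_of_notMem fun hB => h i hB hi)
  choose e heB heS using hmeet
  refine card_le_card_of_injOn e (fun j _ => heS j) fun j₁ _ j₂ _ he => ?_
  by_contra hne
  exact disjoint_left.1 (hdisj hne) (heB j₁) (he ▸ heB j₂)

lemma bsAt_le_card_of_isCert {S : Finset ι} (hS : IsCert f x S) : bsAt f x ≤ S.card :=
  csSup_le ⟨0, fun j => j.elim0, fun j => j.elim0, fun j => j.elim0⟩ fun _ ⟨_, hsens, hdisj⟩ => by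
    simpa using card_le_card_of_isCert hsens (fun _ _ h => hdisj _ _ h) hS

variable [Fintype ι]

lemma bddAbove_blocks (f : (ι → Bool) → Bool) (x : ι → Bool) :
    BddAbove {r | ∃ B : Fin r → Finset ι, (∀ j, f (flipSet x (B j)) ≠ f x) ∧
      ∀ j₁ j₂, j₁ ≠ j₂ → Disjoint (B j₁) (B j₂)} :=
  ⟨Fintype.card ι, fun r ⟨_, hsens, hdisj⟩ => by
    simpa using card_le_card_of_isCert hsens (fun _ _ h => hdisj _ _ h) (isCert_univ f x)⟩

lemma card_le_bsAt [Fintype κ] {B : κ → Finset ι} (hsens : ∀ j, f (flipSet x (B j)) ≠ f x)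
    (hdisj : Pairwise (Disjoint on B)) : Fintype.card κ ≤ bsAt f x := by
  let e := Fintype.equivFin κ
  refine le_csSup (bddAbove_blocks f x) ⟨B ∘ e.symm, fun j => hsens _, fun j₁ j₂ h => ?_⟩
  exact hdisj (e.symm.injective.ne h)

lemma exists_blocks_bsAt (f : (ι → Bool) → Bool) (x : ι → Bool) :
    ∃ B : Fin (bsAt f x) → Finset ι,
      (∀ j, f (flipSet x (B j)) ≠ f x) ∧ Pairwise (Disjoint on B) := by
  refine Nat.sSup_mem ?_ (bddAbove_blocks f x)
  exact ⟨0, fun j => j.elim0, fun j => j.elim0, fun j => j.elim0⟩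

lemma bsAt_le_Dquery (f : (ι → Bool) → Bool) (x : ι → Bool) : bsAt f x ≤ Dquery f := by
  obtain ⟨T, hT, hTf⟩ := exists_depth_le_Dquery f
  have hS : IsCert f x (T.queries x) := by
    simpa only [funext hTf] using T.isCert_queries x
  exact (bsAt_le_card_of_isCert hS).trans ((T.card_queries_le x).trans hT)

lemma sensAt_le_bsAt (f : (ι → Bool) → Bool) (x : ι → Bool) : sensAt f x ≤ bsAt f x := by
  let A := univ.filter fun i => f (flipSet x {i}) ≠ f x
  exact (Fintype.card_coe A).symm.trans_le <|
    card_le_bsAt (B := fun i : A => {i.1}) (fun i => (mem_filter.1 i.2).2)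
      (pairwise_disjoint_singleton A)

lemma sens_le_Dquery (f : (ι → Bool) → Bool) : sens f ≤ Dquery f :=
  Finset.sup_le fun x _ => (sensAt_le_bsAt f x).trans (bsAt_le_Dquery f x)

/-- A minimal sensitive block `C` is sensitive at `flipSet x C` in each of its variables. -/
lemma exists_subset_card_le_sens {B : Finset ι} (hB : f (flipSet x B) ≠ f x) :
    ∃ C ⊆ B, f (flipSet x C) ≠ f x ∧ C.card ≤ sens f := by
  obtain ⟨C, hC, hmin⟩ := exists_min_image {C ∈ B.powerset | f (flipSet x C) ≠ f x} card
    ⟨B, by simp [hB]⟩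
  rw [mem_filter, mem_powerset] at hC
  refine ⟨C, hC.1, hC.2, ?_⟩
  have hsub : C ⊆ ({i | f (flipSet (flipSet x C) {i}) ≠ f (flipSet x C)} : Finset ι) := by
    intro i hi
    have herase : f (flipSet x (C.erase i)) = f x := by
      by_contra h
      have := hmin _ (mem_filter.2 ⟨mem_powerset.2 ((erase_subset _ _).trans hC.1), h⟩)
      exact (card_erase_lt_of_mem hi).not_ge this
    simpa [flipSet_erase hi, herase] using hC.2.symm
  exact (card_le_card hsub).trans (le_sup (f := sensAt f) (mem_univ _))

lemma bsAt_restrictBF_add_one_le {ρ : ι → Option Bool} {B₀ : Finset ι}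
    (hB₀ : ∀ i ∈ B₀, ρ i ≠ none) (hsens : f (flipSet (fill ρ x) B₀) ≠ f (fill ρ x)) :
    bsAt (restrictBF f ρ) x + 1 ≤ bsAt f (fill ρ x) := by
  obtain ⟨B, hBsens, hBdisj⟩ := exists_blocks_bsAt (restrictBF f ρ) x
  let free : Finset ι → Finset ι := fun A => {i ∈ A | ρ i = none}
  have hfree : ∀ j, Disjoint B₀ (free (B j)) := fun j =>
    disjoint_left.2 fun i hi hi' => hB₀ i hi (mem_filter.1 hi').2
  simpa using card_le_bsAt (B := fun j : Option (Fin (bsAt (restrictBF f ρ) x)) =>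
      j.elim B₀ fun j => free (B j))
    (by
      rintro (_ | j)
      · exact hsens
      · simpa [restrictBF_apply, fill_flipSet] using hBsens j)
    (by
      rintro (_ | j₁) (_ | j₂) h
      · exact absurd rfl h
      · exact hfree j₂
      · exact (hfree j₁).symm
      · exact disjoint_filter_filter (hBdisj (Option.some_injective _ |>.ne_iff.1 h)))

end BlockSensitivity

section IterDiff

variable {ι : Type} [DecidableEq ι] {f : (ι → Bool) → Bool} {S M : Finset ι} {i : ι}

def iterDiff (f : (ι → Bool) → Bool) (S : Finset ι) (z : ι → Bool) : ℤ :=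
  ∑ T ∈ S.powerset, (-1) ^ T.card * ((f (flipSet z T)).toNat : ℤ)

lemma iterDiff_empty (f : (ι → Bool) → Bool) (z : ι → Bool) :
    iterDiff f ∅ z = (f z).toNat := by
  simp [iterDiff]

lemma iterDiff_insert (hi : i ∉ S) (z : ι → Bool) :
    iterDiff f (insert i S) z = iterDiff f S z - iterDiff f S (flipSet z {i}) := by
  rw [iterDiff, sum_powerset_insert hi, sub_eq_add_neg, iterDiff, iterDiff, ← sum_neg_distrib]
  congr 1
  refine sum_congr rfl fun T hT => ?_
  have hiT : i ∉ T := fun h => hi (mem_powerset.1 hT h)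
  rw [card_insert_of_notMem hiT, flipSet_insert hiT, pow_succ]
  ring

lemma iterDiff_congr {g : (ι → Bool) → Bool} {z : ι → Bool}
    (h : ∀ T ⊆ S, f (flipSet z T) = g (flipSet z T)) : iterDiff f S z = iterDiff g S z :=
  sum_congr rfl fun T hT => by rw [h T (mem_powerset.1 hT)]

lemma iterDiff_eq_zero_of_mem (hf : ∀ x, f (flipSet x {i}) = f x) (hi : i ∈ S)
    (z : ι → Bool) : iterDiff f S z = 0 := by
  rw [← insert_erase hi, iterDiff_insert (notMem_erase i S), sub_eq_zero]
  exact sum_congr rfl fun T _ => by rw [flipSet_comm, hf]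

lemma iterDiff_flipSet_of_mem (hi : i ∈ M) (z : ι → Bool) :
    iterDiff f M (flipSet z {i}) = -iterDiff f M z := by
  rw [← insert_erase hi, iterDiff_insert (notMem_erase i M), iterDiff_insert (notMem_erase i M),
    flipSet_flipSet_self]
  ring

lemma iterDiff_flipSet_of_notMem (hi : i ∉ M) {z : ι → Bool}
    (h : iterDiff f (insert i M) z = 0) : iterDiff f M (flipSet z {i}) = iterDiff f M z := by
  rw [iterDiff_insert hi, sub_eq_zero] at h
  exact h.symm

lemma exists_flipSet_ne_of_iterDiff_ne_zero (hS : S.Nonempty) {z : ι → Bool}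
    (h : iterDiff f S z ≠ 0) : ∃ B ⊆ S, f (flipSet z B) ≠ f z := by
  by_contra! hconst
  refine h ?_
  rw [iterDiff, sum_congr rfl fun T hT => by rw [hconst T (mem_powerset.1 hT)], ← sum_mul,
    sum_powerset_neg_one_pow_card_of_nonempty hS, zero_mul]

end IterDiff

lemma DTree.iterDiff_eval_eq_zero {ι : Type} [DecidableEq ι] (T : DTree ι) {S : Finset ι}
    (hS : T.depth < S.card) (z : ι → Bool) : iterDiff T.eval S z = 0 := by
  induction T generalizing S z with
  | leaf =>
    obtain ⟨i, hi⟩ := card_pos.1 (by simpa [DTree.depth] using hS)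
    exact iterDiff_eq_zero_of_mem (fun _ => rfl) hi z
  | node j t₀ t₁ ih₀ ih₁ =>
    have hzero : ∀ S', j ∉ S' → max t₀.depth t₁.depth < S'.card →
        ∀ w, iterDiff (DTree.node j t₀ t₁).eval S' w = 0 := fun S' hj hS' w => by
      have hcongr : ∀ T ⊆ S', (DTree.node j t₀ t₁).eval (flipSet w T) =
          (if w j then t₁ else t₀).eval (flipSet w T) := fun T hT => by
        rw [DTree.eval_node, flipSet_apply_of_notMem fun h => hj (hT h)]
        split <;> rfl
      rw [iterDiff_congr hcongr]
      split
      · exact ih₁ (lt_of_le_of_lt (le_max_right _ _) hS') w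
      · exact ih₀ (lt_of_le_of_lt (le_max_left _ _) hS') w
    simp only [DTree.depth] at hS
    by_cases hj : j ∈ S
    · have hcard : max t₀.depth t₁.depth < (S.erase j).card := by
        rw [card_erase_of_mem hj]; omega
      rw [← insert_erase hj, iterDiff_insert (notMem_erase j S), hzero _ (notMem_erase j S) hcard,
        hzero _ (notMem_erase j S) hcard, sub_zero]
    · exact hzero S hj (by omega) z

section RestrictIterDiff

variable {ι : Type} [DecidableEq ι] {f : (ι → Bool) → Bool} {ρ : ι → Option Bool}
  {S : Finset ι}

lemma iterDiff_restrictBF_of_forall (h : ∀ i ∈ S, ρ i = none) (z : ι → Bool) :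
    iterDiff (restrictBF f ρ) S z = iterDiff f S (fill ρ z) := by
  refine sum_congr rfl fun T hT => ?_
  rw [restrictBF_apply, fill_flipSet,
    filter_true_of_mem fun i hi => h i (mem_powerset.1 hT hi)]

lemma iterDiff_restrictBF_eq_zero {i : ι} (hi : i ∈ S) (hρ : ρ i ≠ none) (z : ι → Bool) :
    iterDiff (restrictBF f ρ) S z = 0 := by
  refine iterDiff_eq_zero_of_mem (fun x => ?_) hi z
  rw [restrictBF_apply, restrictBF_apply, fill_flipSet,
    filter_false_of_mem (by simpa using hρ), flipSet_empty]

end RestrictIterDiff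

section Degree

variable {ι : Type} [Fintype ι] [DecidableEq ι] {f : (ι → Bool) → Bool} {S M : Finset ι}

/-- This is the degree of the multilinear polynomial representing `f`: the derivative along `S`
vanishes identically iff no monomial of that polynomial contains `S`. -/
def deg (f : (ι → Bool) → Bool) : ℕ :=
  ({S | ∃ z, iterDiff f S z ≠ 0} : Finset (Finset ι)).sup card

lemma card_le_deg {z : ι → Bool} (h : iterDiff f S z ≠ 0) : S.card ≤ deg f :=
  le_sup (mem_filter.2 ⟨mem_univ _, z, h⟩)

lemma iterDiff_eq_zero_of_deg_lt (h : deg f < S.card) (z : ι → Bool) : iterDiff f S z = 0 := by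
  by_contra hz
  exact h.not_ge (card_le_deg hz)

lemma deg_le_of_forall {d : ℕ} (h : ∀ S : Finset ι, d < S.card → ∀ z, iterDiff f S z = 0) :
    deg f ≤ d :=
  Finset.sup_le fun S hS => by
    obtain ⟨z, hz⟩ := (mem_filter.1 hS).2
    by_contra! hlt
    exact hz (h S hlt z)

lemma exists_iterDiff_ne_zero_of_deg_ne_zero (h : deg f ≠ 0) :
    ∃ M z, M.card = deg f ∧ iterDiff f M z ≠ 0 := by
  have hne : ({S | ∃ z, iterDiff f S z ≠ 0} : Finset (Finset ι)).Nonempty :=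
    nonempty_iff_ne_empty.2 fun he => h (by simp [deg, he])
  obtain ⟨M, hM, hdeg⟩ := exists_mem_eq_sup _ hne card
  obtain ⟨z, hz⟩ := (mem_filter.1 hM).2
  exact ⟨M, z, hdeg.symm, hz⟩

lemma deg_le_Dquery (f : (ι → Bool) → Bool) : deg f ≤ Dquery f := by
  obtain ⟨T, hT, hTf⟩ := exists_depth_le_Dquery f
  refine deg_le_of_forall fun S hS z => ?_
  rw [← funext hTf]
  exact T.iterDiff_eval_eq_zero (hT.trans_lt hS) z

lemma deg_restrictBF_le (f : (ι → Bool) → Bool) (ρ : ι → Option Bool) :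
    deg (restrictBF f ρ) ≤ deg f := by
  refine deg_le_of_forall fun S hS z => ?_
  by_cases h : ∀ i ∈ S, ρ i = none
  · rw [iterDiff_restrictBF_of_forall h]
    exact iterDiff_eq_zero_of_deg_lt hS _
  · obtain ⟨i, hi, hρ⟩ := not_forall₂.1 h
    exact iterDiff_restrictBF_eq_zero hi hρ z

/-- Along a set of size at least `deg f`, the derivative of `f` is constant up to sign: flipping
`i ∈ M` negates it, and flipping `i ∉ M` changes it by the derivative along `insert i M`, which
vanishes. -/
lemma abs_iterDiff_flipSet (hM : deg f ≤ M.card) (z : ι → Bool) (B : Finset ι) :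
    |iterDiff f M (flipSet z B)| = |iterDiff f M z| := by
  induction B using Finset.induction_on with
  | empty => rw [flipSet_empty]
  | insert i B hi ih =>
    rw [flipSet_insert hi, flipSet_comm]
    by_cases hiM : i ∈ M
    · rw [iterDiff_flipSet_of_mem hiM, abs_neg, ih]
    · have hlt : deg f < (insert i M).card := by rw [card_insert_of_notMem hiM]; omega
      rw [iterDiff_flipSet_of_notMem hiM (iterDiff_eq_zero_of_deg_lt hlt _), ih]

lemma flipSet_filter_ne (z w : ι → Bool) : flipSet z {i | z i ≠ w i} = w := by
  funext i
  cases hz : z i <;> cases hw : w i <;> simp [flipSet, hz, hw]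

lemma abs_iterDiff_eq (hM : deg f ≤ M.card) (z w : ι → Bool) :
    |iterDiff f M z| = |iterDiff f M w| := by
  rw [← flipSet_filter_ne z w, abs_iterDiff_flipSet hM]

lemma eq_of_deg_eq_zero (h : deg f = 0) (x y : ι → Bool) : f x = f y := by
  have := abs_iterDiff_eq (f := f) (M := ∅) h.le x y
  rw [iterDiff_empty, iterDiff_empty] at this
  cases hx : f x <;> cases hy : f y <;> simp_all

lemma exists_maxonomial_blocks (h : deg f ≠ 0) :
    ∃ M : Finset ι, M.card = deg f ∧ ∀ w, ∃ B ⊆ M, f (flipSet w B) ≠ f w := by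
  obtain ⟨M, z, hM, hz⟩ := exists_iterDiff_ne_zero_of_deg_ne_zero h
  refine ⟨M, hM, fun w => exists_flipSet_ne_of_iterDiff_ne_zero (card_pos.1 (by omega)) ?_⟩
  rwa [← abs_ne_zero, abs_iterDiff_eq hM.ge w z, abs_ne_zero]

end Degree

section Condensation

variable {ι : Type} [Fintype ι] [DecidableEq ι] {f : (ι → Bool) → Bool}

lemma Dquery_eq_zero_of_deg_eq_zero (h : deg f = 0) : Dquery f = 0 :=
  Nat.le_zero.1 (Dquery_le_depth (.leaf (f fun _ => false)) fun x => eq_of_deg_eq_zero h _ x)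

lemma blockSens_restrictBF_fixOn_lt {M : Finset ι} (hM : ∀ w, ∃ B ⊆ M, f (flipSet w B) ≠ f w)
    (w : ι → Bool) : blockSens (restrictBF f (fixOn M w)) < blockSens f := by
  have key : ∀ x, bsAt (restrictBF f (fixOn M w)) x + 1 ≤ blockSens f := fun x => by
    obtain ⟨B, hBM, hB⟩ := hM (fill (fixOn M w) x)
    exact (bsAt_restrictBF_add_one_le (fun i hi => by simp [fixOn, hBM hi]) hB).trans
      (le_sup (f := bsAt f) (mem_univ _))
  exact (Finset.sup_lt_iff (Nat.succ_pos _ |>.trans_le (key w))).2 fun x _ => key x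

/-- Midrijanis: a maxonomial meets a sensitive block at every input, so querying it lowers the
block sensitivity, and never the degree. -/
theorem Dquery_le_blockSens_mul_deg (f : (ι → Bool) → Bool) :
    Dquery f ≤ blockSens f * deg f := by
  suffices h : ∀ k (g : (ι → Bool) → Bool), blockSens g ≤ k → deg g ≤ deg f →
      Dquery g ≤ k * deg f from h _ f le_rfl le_rfl
  intro k
  induction k with
  | zero =>
    intro g hbs _
    rcases eq_or_ne (deg g) 0 with h0 | h0
    · simp [Dquery_eq_zero_of_deg_eq_zero h0]
    obtain ⟨M, -, hM⟩ := exists_maxonomial_blocks h0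
    exact absurd (blockSens_restrictBF_fixOn_lt hM fun _ => false) (by omega)
  | succ k ih =>
    intro g hbs hdeg
    rcases eq_or_ne (deg g) 0 with h0 | h0
    · simp [Dquery_eq_zero_of_deg_eq_zero h0]
    obtain ⟨M, hM, hblocks⟩ := exists_maxonomial_blocks h0
    calc Dquery g ≤ k * deg f + M.card := Dquery_le_add_card M fun w =>
          ih _ (by have := blockSens_restrictBF_fixOn_lt hblocks w; omega)
            ((deg_restrictBF_le g _).trans hdeg)
      _ ≤ (k + 1) * deg f := by rw [add_mul, one_mul, hM]; omega

lemma exists_restrictBF_of_blocks {κ : Type} [Fintype κ] {x : ι → Bool} {B : κ → Finset ι}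
    (hsens : ∀ j, f (flipSet x (B j)) ≠ f x) (hdisj : Pairwise (Disjoint on B)) :
    ∃ ρ, unsetCard ρ ≤ ∑ j, (B j).card ∧ Fintype.card κ ≤ Dquery (restrictBF f ρ) := by
  let U := univ.biUnion B
  refine ⟨fixOutside U x, (unsetCard_fixOutside U x).trans_le card_biUnion_le, ?_⟩
  refine (card_le_bsAt (fun j => ?_) hdisj).trans (bsAt_le_Dquery _ x)
  rw [restrictBF_fixOutside_flipSet f (subset_biUnion_of_mem B (mem_univ j)), restrictBF_apply,
    fill_fixOutside_self]
  exact hsens j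

lemma exists_restrictBF_sens (f : (ι → Bool) → Bool) :
    ∃ ρ, unsetCard ρ ≤ sens f ∧ sens f ≤ Dquery (restrictBF f ρ) := by
  obtain ⟨x, -, hx⟩ := exists_mem_eq_sup univ univ_nonempty (sensAt f)
  let A := univ.filter fun i => f (flipSet x {i}) ≠ f x
  obtain ⟨ρ, hρ, hD⟩ := exists_restrictBF_of_blocks (B := fun i : A => {i.1})
    (fun i => (mem_filter.1 i.2).2) (pairwise_disjoint_singleton A)
  simp only [card_singleton, sum_const, card_univ, Fintype.card_coe, smul_eq_mul, mul_one] at hρ hD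
  exact ⟨ρ, by rwa [sens, hx], by rwa [sens, hx]⟩

lemma exists_restrictBF_deg (f : (ι → Bool) → Bool) :
    ∃ ρ, unsetCard ρ ≤ deg f ∧ deg f ≤ Dquery (restrictBF f ρ) := by
  rcases eq_or_ne (deg f) 0 with h0 | h0
  · exact ⟨fixOutside ∅ fun _ => false, by simp [unsetCard_fixOutside], by simp [h0]⟩
  obtain ⟨M, z, hM, hz⟩ := exists_iterDiff_ne_zero_of_deg_ne_zero h0
  refine ⟨fixOutside M z, (unsetCard_fixOutside M z).trans_le hM.le, ?_⟩
  refine hM ▸ (card_le_deg (z := z) ?_).trans (deg_le_Dquery _)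
  rwa [iterDiff_restrictBF_of_forall (by simp [fixOutside]), fill_fixOutside_self]

lemma exists_restrictBF_of_le_blockSens {k : ℕ} (hk : k ≤ blockSens f) :
    ∃ ρ, unsetCard ρ ≤ k * sens f ∧ k ≤ Dquery (restrictBF f ρ) := by
  obtain ⟨x, -, hx⟩ := exists_mem_eq_sup univ univ_nonempty (bsAt f)
  obtain ⟨B, hsens, hdisj⟩ := exists_blocks_bsAt f x
  have hkx : k ≤ bsAt f x := hx ▸ hk
  choose C hCB hCsens hCcard using fun j : Fin k =>
    exists_subset_card_le_sens (hsens (Fin.castLE hkx j))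
  obtain ⟨ρ, hρ, hD⟩ := exists_restrictBF_of_blocks hCsens fun j₁ j₂ h =>
    (hdisj ((Fin.castLE_injective hkx).ne h)).mono (hCB j₁) (hCB j₂)
  refine ⟨ρ, hρ.trans ?_, by simpa using hD⟩
  calc ∑ j, (C j).card ≤ ∑ _j : Fin k, sens f := sum_le_sum fun j _ => hCcard j
    _ = k * sens f := by simp

end Condensation

/-- for every `f` there is a restriction with `O(D(f))` unset
variables such that `D(f|_ρ) = Ω(√(D(f)))`. -/
theorem D_lossy_condensation :
    ∃ c₁ c₂ : ℝ, 0 < c₁ ∧ 0 < c₂ ∧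
      ∀ (n : ℕ) (f : (Fin n → Bool) → Bool),
        ∃ ρ : Fin n → Option Bool,
          (unsetCard ρ : ℝ) ≤ c₁ * (Dquery f : ℝ) ∧
          c₂ * Real.sqrt (Dquery f) ≤ (Dquery (restrictBF f ρ) : ℝ) := by
  refine ⟨2, 1, two_pos, one_pos, fun n f => ?_⟩
  simp only [one_mul]
  set r := √(Dquery f : ℝ)
  have hr : 0 ≤ r := Real.sqrt_nonneg _
  have hrr : r * r = Dquery f := Real.mul_self_sqrt (Nat.cast_nonneg _)
  have hrD : r ≤ Dquery f :=
    (Real.sqrt_le_left (Nat.cast_nonneg _)).2 (mod_cast Nat.le_self_pow two_ne_zero _)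
  rcases le_or_gt r (deg f) with hdeg | hdeg
  · obtain ⟨ρ, hρ, hdegρ⟩ := exists_restrictBF_deg f
    have hρD : (unsetCard ρ : ℝ) ≤ Dquery f := mod_cast hρ.trans (deg_le_Dquery f)
    exact ⟨ρ, by linarith, hdeg.trans (mod_cast hdegρ)⟩
  rcases le_or_gt r (sens f) with hs | hs
  · obtain ⟨ρ, hρ, hsρ⟩ := exists_restrictBF_sens f
    have hρD : (unsetCard ρ : ℝ) ≤ Dquery f := mod_cast hρ.trans (sens_le_Dquery f)
    exact ⟨ρ, by linarith, hs.trans (mod_cast hsρ)⟩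
  have hbs : r ≤ blockSens f := by
    have hmid : (Dquery f : ℝ) ≤ blockSens f * deg f := mod_cast Dquery_le_blockSens_mul_deg f
    -- `r * r = D ≤ bs * deg ≤ bs * r`
    nlinarith [mul_le_mul_of_nonneg_left hdeg.le (Nat.cast_nonneg (α := ℝ) (blockSens f))]
  obtain ⟨ρ, hρ, hkρ⟩ := exists_restrictBF_of_le_blockSens (Nat.ceil_le.2 hbs)
  refine ⟨ρ, ?_, (Nat.le_ceil r).trans (mod_cast hkρ)⟩
  calc (unsetCard ρ : ℝ) ≤ ⌈r⌉₊ * sens f := mod_cast hρ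
    _ ≤ (r + 1) * r := by gcongr; exact (Nat.ceil_lt_add_one hr).le
    _ ≤ 2 * Dquery f := by linarith
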